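/- arXiv:2001.03853 — 8 statements merged into one kernel-verified Lean document; each statement's English description precedes it below -/
import Mathlib

section
/- Let m, n ≥ 1. For x, x' ∈ [0,1] with x ≤ x', the largest fixed point in [0,1] of r ↦ (1 - (1 - x·r)^n)^m is less than or equal to the largest fixed point of r ↦ (1 - (1 - x'·r)^n)^m. That is, the reliability function ρ(x) (defined as the largest fixed point) is nondecreasing in x. -/
/-- The reliability `ρ(x)`, defined as the largest fixed point in `[0,1]` of
`r ↦ (1 - (1 - x·r)^n)^m`, is nondecreasing in `x`. -/
theorem stmt2 (m n : ℕ) (hm : 1 ≤ m) (hn : 1 ≤ n)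
    (x x' : ℝ) (hx : x ∈ Set.Icc (0:ℝ) 1) (hx' : x' ∈ Set.Icc (0:ℝ) 1) (hle : x ≤ x')
    (ρ ρ' : ℝ)
    (h : IsGreatest {r | r ∈ Set.Icc (0:ℝ) 1 ∧ r = (1 - (1 - x * r) ^ n) ^ m} ρ)
    (h' : IsGreatest {r | r ∈ Set.Icc (0:ℝ) 1 ∧ r = (1 - (1 - x' * r) ^ n) ^ m} ρ') :
    ρ ≤ ρ' := by
  obtain ⟨⟨⟨hρ0, hρ1⟩, hfix⟩, _⟩ := h
  obtain ⟨_, hub'⟩ := h'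
  obtain ⟨hx0, hx1⟩ := hx
  obtain ⟨hx'0, hx'1⟩ := hx'
  -- general bounds for the map at argument r ∈ [0,1] with parameter y ∈ [0,1]
  have key : ∀ y r : ℝ, 0 ≤ y → y ≤ 1 → 0 ≤ r → r ≤ 1 →
      0 ≤ (1 - (1 - y * r) ^ n) ^ m ∧ (1 - (1 - y * r) ^ n) ^ m ≤ 1 := by
    intro y r hy0 hy1 hr0 hr1
    have h1 : 0 ≤ 1 - y * r := by nlinarith
    have h2 : 1 - y * r ≤ 1 := by nlinarith
    have h3 : (1 - y * r) ^ n ≤ 1 := pow_le_one₀ h1 h2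
    have h4 : 0 ≤ (1 - y * r) ^ n := pow_nonneg h1 n
    constructor
    · exact pow_nonneg (by linarith) m
    · exact pow_le_one₀ (by linarith) (by linarith)
  -- f'(ρ) ≥ ρ
  have hmono : ρ ≤ (1 - (1 - x' * ρ) ^ n) ^ m := by
    have h1 : 0 ≤ 1 - x' * ρ := by nlinarith
    have h2 : 1 - x' * ρ ≤ 1 - x * ρ := by nlinarith
    have h3 : (1 - x' * ρ) ^ n ≤ (1 - x * ρ) ^ n := pow_le_pow_left₀ h1 h2 n
    have h4 : (1 - x * ρ) ^ n ≤ 1 := pow_le_one₀ (by linarith) (by nlinarith)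
    have h5 : 0 ≤ 1 - (1 - x * ρ) ^ n := by linarith
    have h6 : (1 - (1 - x * ρ) ^ n) ^ m ≤ (1 - (1 - x' * ρ) ^ n) ^ m :=
      pow_le_pow_left₀ h5 (by linarith) m
    linarith [hfix]
  -- IVT on g r = r - f'(r) on [ρ, 1]
  set g : ℝ → ℝ := fun r => r - (1 - (1 - x' * r) ^ n) ^ m with hg
  have hcont : ContinuousOn g (Set.Icc ρ 1) := by
    apply Continuous.continuousOn; fun_prop
  have hgρ : g ρ ≤ 0 := by simp [hg]; linarith
  have hg1 : 0 ≤ g 1 := by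
    have := (key x' 1 hx'0 hx'1 zero_le_one le_rfl).2
    simp only [mul_one] at this
    simp [hg]; linarith
  have hsub : Set.Icc (g ρ) (g 1) ⊆ g '' Set.Icc ρ 1 :=
    intermediate_value_Icc hρ1 hcont
  obtain ⟨c, hc, hgc⟩ := hsub ⟨hgρ, hg1⟩
  have hcfix : c = (1 - (1 - x' * c) ^ n) ^ m := by
    have : c - (1 - (1 - x' * c) ^ n) ^ m = 0 := hgc
    linarith
  have hc1 : c ≤ ρ' := hub' ⟨⟨le_trans hρ0 hc.1, hc.2⟩, hcfix⟩
  linarith [hc.1]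
end

section
/- Let m ≥ 2 and n ≥ 2 be natural numbers. Then there exists r ∈ (0,1) such that (1 - (1 - r^{1/m})^{1/n}) / r < 1. Consequently, the infimum x_crit := inf_{r ∈ (0,1]} χ(r) satisfies x_crit < 1, where χ(r) = (1 - (1 - r^{1/m})^{1/n}) / r. -/
lemma chi_lt_one_aux (m n : ℕ) (hm : 2 ≤ m) (hn : 2 ≤ n) :
    (1 - (1 - ((1:ℝ) - 1/(2*m)) ^ ((1:ℝ) / (m:ℝ))) ^ ((1:ℝ) / (n:ℝ))) /
      ((1:ℝ) - 1/(2*m)) < 1 := by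
  have hm0 : (0:ℝ) < (m:ℝ) := by positivity
  have hm2 : (2:ℝ) ≤ (m:ℝ) := by exact_mod_cast hm
  have hn2 : (2:ℝ) ≤ (n:ℝ) := by exact_mod_cast hn
  set ε : ℝ := 1/(2*m) with hε
  have hε0 : 0 < ε := by positivity
  have hε4 : ε ≤ 1/4 := by
    rw [hε]; rw [div_le_div_iff₀ (by positivity) (by norm_num)]; nlinarith
  set r : ℝ := 1 - ε with hr
  have hr0 : 0 < r := by rw [hr]; linarith
  have hr1 : r < 1 := by rw [hr]; linarith
  -- Step A: r^{1/m} ≤ 1 - ε/m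
  have hbase : (0:ℝ) ≤ 1 - ε/m := by
    have : ε/m ≤ ε := by
      apply div_le_self hε0.le; linarith
    linarith [hε4]
  have hbern : r ≤ (1 - ε/m) ^ m := by
    have h := one_add_mul_le_pow (a := -(ε/m)) (by nlinarith [hε0.le]) m
    have hms : (m:ℝ) * (ε/m) = ε := by field_simp
    calc r = 1 + (m:ℝ) * (-(ε/m)) := by rw [hr]; rw [mul_neg, hms]; ring
    _ ≤ (1 + -(ε/m)) ^ m := h
    _ = (1 - ε/m) ^ m := by ring_nf
  have hA : r ^ ((1:ℝ)/(m:ℝ)) ≤ 1 - ε/m := by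
    have h1 : r ^ ((1:ℝ)/(m:ℝ)) ≤ ((1 - ε/m) ^ m) ^ ((1:ℝ)/(m:ℝ)) :=
      Real.rpow_le_rpow hr0.le hbern (by positivity)
    have h2 : ((1 - ε/m) ^ m) ^ ((1:ℝ)/(m:ℝ)) = 1 - ε/m := by
      rw [← Real.rpow_natCast (1 - ε/m) m, ← Real.rpow_mul hbase]
      rw [mul_one_div, div_self (ne_of_gt hm0), Real.rpow_one]
    rwa [h2] at h1
  have hB : ε/m ≤ 1 - r ^ ((1:ℝ)/(m:ℝ)) := by linarith
  have hεm0 : 0 < ε/m := by positivity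
  have hεm1 : ε/m ≤ 1 := by linarith
  -- Step C: (ε/m)^{1/2} ≤ (ε/m)^{1/n} ≤ (1 - r^{1/m})^{1/n}
  have hC1 : (ε/m) ^ ((1:ℝ)/2) ≤ (ε/m) ^ ((1:ℝ)/(n:ℝ)) := by
    apply Real.rpow_le_rpow_of_exponent_ge hεm0 hεm1
    apply div_le_div_of_nonneg_left (by norm_num) (by norm_num) hn2
  have hC2 : (ε/m) ^ ((1:ℝ)/(n:ℝ)) ≤ (1 - r ^ ((1:ℝ)/(m:ℝ))) ^ ((1:ℝ)/(n:ℝ)) :=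
    Real.rpow_le_rpow hεm0.le hB (by positivity)
  -- Step D: ε < (ε/m)^{1/2}
  have hD : ε < (ε/m) ^ ((1:ℝ)/2) := by
    rw [← Real.sqrt_eq_rpow]
    rw [show (1:ℝ)/2 = (2⁻¹ : ℝ) by norm_num] at *
    have := (Real.lt_sqrt hε0.le).mpr (show ε^2 < ε/m by
      rw [hε]; rw [div_div]; rw [div_pow]
      rw [div_lt_div_iff₀ (by positivity) (by positivity)]
      ring_nf; nlinarith)
    exact this
  have hkey : 1 - r < (1 - r ^ ((1:ℝ)/(m:ℝ))) ^ ((1:ℝ)/(n:ℝ)) := by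
    have : 1 - r = ε := by rw [hr]; ring
    rw [this]; linarith
  rw [div_lt_one hr0]; linarith

/-- For `m, n ≥ 2` there is `r ∈ (0,1)` with `χ(r) < 1`, where
`χ(r) = (1 - (1 - r^{1/m})^{1/n}) / r`; consequently
`x_crit = inf_{r ∈ (0,1]} χ(r) < 1`. -/
theorem stmt6 (m n : ℕ) (hm : 2 ≤ m) (hn : 2 ≤ n) :
    (∃ r ∈ Set.Ioo (0:ℝ) 1,
      (1 - (1 - r ^ ((1:ℝ) / (m:ℝ))) ^ ((1:ℝ) / (n:ℝ))) / r < 1) ∧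
    sInf ((fun r : ℝ => (1 - (1 - r ^ ((1:ℝ) / (m:ℝ))) ^ ((1:ℝ) / (n:ℝ))) / r) ''
      Set.Ioc (0:ℝ) 1) < 1 := by
  have hm0 : (0:ℝ) < (m:ℝ) := by positivity
  have hm2 : (2:ℝ) ≤ (m:ℝ) := by exact_mod_cast hm
  have hε4 : (1:ℝ)/(2*m) ≤ 1/4 := by
    rw [div_le_div_iff₀ (by positivity) (by norm_num)]; nlinarith
  have hε0 : (0:ℝ) < 1/(2*m) := by positivity
  set r₀ : ℝ := 1 - 1/(2*m) with hr₀
  have hr0 : 0 < r₀ := by rw [hr₀]; linarith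
  have hr1 : r₀ < 1 := by rw [hr₀]; linarith
  have hχ := chi_lt_one_aux m n hm hn
  refine ⟨⟨r₀, ⟨hr0, hr1⟩, hχ⟩, ?_⟩
  have hbdd : BddBelow ((fun r : ℝ => (1 - (1 - r ^ ((1:ℝ) / (m:ℝ))) ^ ((1:ℝ) / (n:ℝ))) / r) ''
      Set.Ioc (0:ℝ) 1) := by
    refine ⟨0, ?_⟩
    rintro y ⟨r, ⟨hrp, hrle⟩, rfl⟩
    have h1 : r ^ ((1:ℝ)/(m:ℝ)) ≤ 1 := Real.rpow_le_one hrp.le hrle (by positivity)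
    have h2 : (1 - r ^ ((1:ℝ)/(m:ℝ))) ^ ((1:ℝ)/(n:ℝ)) ≤ 1 :=
      Real.rpow_le_one (by linarith) (by
        have : 0 ≤ r ^ ((1:ℝ)/(m:ℝ)) := Real.rpow_nonneg hrp.le _
        linarith) (by positivity)
    exact div_nonneg (by linarith) hrp.le
  exact csInf_lt_of_lt hbdd ⟨r₀, ⟨hr0, hr1.le⟩, rfl⟩ hχ
end

section
/- Let m ≥ 2, n ≥ 1, and define x_crit = inf_{r ∈ (0,1]} χ(r) where χ(r) = (1 - (1 - r^{1/m})^{1/n}) / r. If x ∈ [0,1] satisfies x < x_crit, then the only fixed point of r ↦ (1 - (1 - x·r)^n)^m in [0,1] is r = 0. Moreover x_crit > 0. -/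
/-! Every positive fixed point `r` of `r ↦ (1 - (1 - x r)^n)^m` can be solved for `x`, giving
`x = χ(r)`; so no such fixed point exists below `inf χ`. The infimum is at least `1/n`: since
`r ≤ r^{1/m}`, Bernoulli's inequality `(1 - s)^{1/n} ≤ 1 - s/n` gives `χ(r) ≥ r^{1/m} / (n r) ≥ 1/n`. -/

open Set

noncomputable def chi (m n : ℕ) (r : ℝ) : ℝ :=
  (1 - (1 - r ^ ((1:ℝ) / (m:ℝ))) ^ ((1:ℝ) / (n:ℝ))) / r

lemma one_div_le_chi {m n : ℕ} (hm : 1 ≤ m) (hn : 1 ≤ n) {r : ℝ} (hr : r ∈ Ioc (0:ℝ) 1) :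
    1 / (n:ℝ) ≤ chi m n r := by
  obtain ⟨hr0, hr1⟩ := hr
  have hm' : (1:ℝ) ≤ m := by exact_mod_cast hm
  have hn' : (1:ℝ) ≤ n := by exact_mod_cast hn
  set s := r ^ ((1:ℝ) / m)
  have hrs : r ≤ s := Real.self_le_rpow_of_le_one hr0.le hr1 (div_le_one_of_le₀ hm' (by positivity))
  have hs1 : s ≤ 1 := Real.rpow_le_one hr0.le hr1 (by positivity)
  have hbernoulli : (1 - s) ^ ((1:ℝ) / n) ≤ 1 + 1 / n * -s := by
    simpa only [sub_eq_add_neg] using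
      rpow_one_add_le_one_add_mul_self (by linarith) (by positivity)
        (div_le_one_of_le₀ hn' (by positivity))
  rw [chi, le_div_iff₀ hr0]
  calc 1 / (n:ℝ) * r ≤ 1 / n * s := by gcongr
    _ ≤ 1 - (1 - s) ^ ((1:ℝ) / n) := by linarith

lemma chi_eq_of_fixed_point {m n : ℕ} (hm : m ≠ 0) (hn : n ≠ 0) {x r : ℝ} (hr : 0 < r)
    (hxr0 : 0 ≤ x * r) (hxr1 : x * r ≤ 1) (hfix : r = (1 - (1 - x * r) ^ n) ^ m) :
    chi m n r = x := by
  have hb : 0 ≤ 1 - x * r := by linarith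
  have ha : 0 ≤ 1 - (1 - x * r) ^ n := sub_nonneg.2 (pow_le_one₀ hb (by linarith))
  have hroot : r ^ ((1:ℝ) / m) = 1 - (1 - x * r) ^ n := by
    rw [one_div, ← Real.pow_rpow_inv_natCast ha hm, ← hfix]
  rw [chi, hroot, sub_sub_cancel, one_div, Real.pow_rpow_inv_natCast hb hn, sub_sub_cancel,
    mul_div_cancel_right₀ x hr.ne']

/-- For `m ≥ 2`, `n ≥ 1` and `x_crit = inf_{r ∈ (0,1]} χ(r)`:
if `x ∈ [0,1]` with `x < x_crit`, then the only fixed point in `[0,1]` of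
`r ↦ (1 - (1 - x·r)^n)^m` is `r = 0`; moreover `x_crit > 0`. -/
theorem stmt7 (m n : ℕ) (hm : 2 ≤ m) (hn : 1 ≤ n)
    (xcrit : ℝ)
    (hxc : xcrit = sInf ((fun r : ℝ =>
      (1 - (1 - r ^ ((1:ℝ) / (m:ℝ))) ^ ((1:ℝ) / (n:ℝ))) / r) '' Set.Ioc (0:ℝ) 1)) :
    (∀ x ∈ Set.Icc (0:ℝ) 1, x < xcrit →
      ∀ r ∈ Set.Icc (0:ℝ) 1, r = (1 - (1 - x * r) ^ n) ^ m → r = 0) ∧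
    0 < xcrit := by
  change xcrit = sInf (chi m n '' Ioc 0 1) at hxc
  have hlower : ∀ y ∈ chi m n '' Ioc 0 1, 1 / (n:ℝ) ≤ y := by
    rintro _ ⟨r, hr, rfl⟩
    exact one_div_le_chi (by omega) hn hr
  have hxcrit : 1 / (n:ℝ) ≤ xcrit := hxc ▸ le_csInf ⟨chi m n 1, 1, by simp⟩ hlower
  refine ⟨fun x ⟨hx0, hx1⟩ hlt r ⟨hr0, hr1⟩ hfix => ?_, lt_of_lt_of_le (by positivity) hxcrit⟩
  by_contra hr
  have hpos : 0 < r := lt_of_le_of_ne hr0 (Ne.symm hr)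
  have hchi : chi m n r = x :=
    chi_eq_of_fixed_point (by omega) (by omega) hpos (mul_nonneg hx0 hr0)
      (mul_le_one₀ hx1 hr0 hr1) hfix
  have : xcrit ≤ x := hxc ▸ hchi ▸ csInf_le ⟨_, hlower⟩ ⟨r, ⟨hpos, hr1⟩, rfl⟩
  linarith
end

section
/- Let m ≥ 2, n ≥ 2, let r_crit be a minimizer of χ(r) = (1 - (1 - r^{1/m})^{1/n}) / r on (0,1] with r_crit ∈ (0,1), and set x_crit = χ(r_crit). Then the reliability function ρ (largest fixed point of r = (1-(1-xr)^n)^m) is discontinuous at x_crit: ρ(x) = 0 for all x < x_crit while ρ(x_crit) ≥ r_crit > 0. -/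
/-!
Substituting `s = x r`, a fixed point `r ∈ (0,1]` of `r = (1 - (1 - x r)^n)^m` is the same as
`x r = 1 - (1 - r^{1/m})^{1/n}`, i.e. `x = χ r`, because `s ↦ (1 - (1 - s)^n)^m` is a bijection of
`[0,1]` with inverse `r ↦ 1 - (1 - r^{1/m})^{1/n}`. Hence a positive fixed point forces `x ≥ min χ`,
while `r_crit` itself is a fixed point at `x_crit = χ r_crit`.
-/

open Real

def seriesParallel (m n : ℕ) (s : ℝ) : ℝ := (1 - (1 - s) ^ n) ^ m

noncomputable def seriesParallelInv (m n : ℕ) (r : ℝ) : ℝ :=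
  1 - (1 - r ^ ((1:ℝ) / (m:ℝ))) ^ ((1:ℝ) / (n:ℝ))

theorem seriesParallelInv_seriesParallel {m n : ℕ} (hm : m ≠ 0) (hn : n ≠ 0) {s : ℝ}
    (hs₀ : 0 ≤ s) (hs₁ : s ≤ 1) : seriesParallelInv m n (seriesParallel m n s) = s := by
  have ht₀ : 0 ≤ 1 - s := by linarith
  have htn₁ : (1 - s) ^ n ≤ 1 := pow_le_one₀ ht₀ (by linarith)
  rw [seriesParallelInv, seriesParallel, one_div, one_div,
    pow_rpow_inv_natCast (by linarith) hm, sub_sub_cancel, pow_rpow_inv_natCast ht₀ hn,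
    sub_sub_cancel]

theorem seriesParallel_seriesParallelInv {m n : ℕ} (hm : m ≠ 0) (hn : n ≠ 0) {r : ℝ}
    (hr₀ : 0 ≤ r) (hr₁ : r ≤ 1) : seriesParallel m n (seriesParallelInv m n r) = r := by
  have hb₀ : 0 ≤ 1 - r ^ ((m:ℝ)⁻¹) := sub_nonneg.2 (rpow_le_one hr₀ hr₁ (by positivity))
  rw [seriesParallel, seriesParallelInv, sub_sub_cancel, one_div, one_div,
    rpow_inv_natCast_pow hb₀ hn, sub_sub_cancel, rpow_inv_natCast_pow hr₀ hm]

/-- For `m, n ≥ 2`, if `r_crit ∈ (0,1)` minimizes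
`χ(r) = (1 - (1 - r^{1/m})^{1/n}) / r` on `(0,1]` and `x_crit = χ(r_crit)`, then
the reliability `ρ` (largest fixed point) satisfies `ρ(x) = 0` for `x < x_crit`
while `ρ(x_crit) ≥ r_crit > 0`: a discontinuity at `x_crit`. -/
theorem stmt9 (m n : ℕ) (hm : 2 ≤ m) (hn : 2 ≤ n)
    (χ : ℝ → ℝ)
    (hχ : ∀ r ∈ Set.Ioc (0:ℝ) 1,
      χ r = (1 - (1 - r ^ ((1:ℝ) / (m:ℝ))) ^ ((1:ℝ) / (n:ℝ))) / r)
    (rcrit : ℝ) (hrc : rcrit ∈ Set.Ioo (0:ℝ) 1)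
    (hmin : ∀ r ∈ Set.Ioc (0:ℝ) 1, χ rcrit ≤ χ r)
    (xcrit : ℝ) (hxc : xcrit = χ rcrit)
    (ρ : ℝ → ℝ)
    (hρ : ∀ x : ℝ, IsGreatest
      {r | r ∈ Set.Icc (0:ℝ) 1 ∧ r = (1 - (1 - x * r) ^ n) ^ m} (ρ x)) :
    (∀ x ∈ Set.Icc (0:ℝ) 1, x < xcrit → ρ x = 0) ∧ rcrit ≤ ρ xcrit ∧ 0 < rcrit := by
  have hm₀ : m ≠ 0 := by omega
  have hn₀ : n ≠ 0 := by omega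
  obtain ⟨hrc₀, hrc₁⟩ := hrc
  have hχ_mul : ∀ r ∈ Set.Ioc (0:ℝ) 1, χ r * r = seriesParallelInv m n r := fun r hr ↦ by
    rw [hχ r hr, div_mul_cancel₀ _ hr.1.ne', seriesParallelInv]
  refine ⟨fun x ⟨hx₀, hx₁⟩ hx ↦ ?_, ?_, hrc₀⟩
  · obtain ⟨⟨⟨hρ₀, hρ₁⟩, hρ_fix⟩, -⟩ := hρ x
    by_contra hρ_ne
    have hρ_pos : 0 < ρ x := hρ₀.lt_of_ne' hρ_ne
    have hx_eq : x * ρ x = χ (ρ x) * ρ x := calc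
      x * ρ x = seriesParallelInv m n (seriesParallel m n (x * ρ x)) :=
        (seriesParallelInv_seriesParallel hm₀ hn₀ (by positivity)
          (mul_le_one₀ hx₁ hρ₀ hρ₁)).symm
      _ = χ (ρ x) * ρ x := by
        rw [show seriesParallel m n (x * ρ x) = ρ x from hρ_fix.symm, hχ_mul _ ⟨hρ_pos, hρ₁⟩]
    have := hmin (ρ x) ⟨hρ_pos, hρ₁⟩
    have := mul_right_cancel₀ hρ_pos.ne' hx_eq
    linarith
  · refine (hρ xcrit).2 ⟨⟨hrc₀.le, hrc₁.le⟩, ?_⟩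
    change rcrit = seriesParallel m n (xcrit * rcrit)
    rw [hxc, hχ_mul _ ⟨hrc₀, hrc₁.le⟩, seriesParallel_seriesParallelInv hm₀ hn₀ hrc₀.le hrc₁.le]
end

section
/- Let m ≥ 2, n ≥ 2. The function β(r) = m·n·r^{2 - 1/m}·(1 - r^{1/m})^{1 - 1/n} on (0,1) is positive, and it attains a unique maximum at r̂ = ((2m - 1)·n / (2·m·n - 1))^m; moreover β is strictly increasing on (0, r̂) and strictly decreasing on (r̂, 1). -/
/-!
Substituting `s = r^{1/m}` turns `β` into `m n s^p (1 - s)^q` with `p = 2m - 1` and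
`q = 1 - 1/n`. The derivative of `s^p (1 - s)^q` is `s^{p-1} (1 - s)^{q-1} (p - (p + q) s)`, so
on `[0, 1]` it increases strictly up to its mode `p / (p + q) = (2m - 1) n / (2mn - 1)` and
decreases strictly after it. As `r ↦ r^{1/m}` is strictly increasing, `β` increases strictly up
to `r̂`, the `m`-th power of the mode, and decreases strictly after it.
-/

open Set

section BetaKernel

variable {p q : ℝ}

theorem hasDerivAt_rpow_mul_one_sub_rpow {s : ℝ} (hs : s ∈ Ioo (0 : ℝ) 1) (p q : ℝ) :
    HasDerivAt (fun s : ℝ => s ^ p * (1 - s) ^ q)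
      (s ^ (p - 1) * (1 - s) ^ (q - 1) * (p - (p + q) * s)) s := by
  have hs0 : s ≠ 0 := hs.1.ne'
  have hs1 : 1 - s ≠ 0 := by linarith [hs.2]
  have hleft := Real.hasDerivAt_rpow_const (p := p) (Or.inl hs0)
  have hright := (Real.hasDerivAt_rpow_const (p := q) (Or.inl hs1)).comp s
    ((hasDerivAt_id s).const_sub 1)
  refine (hleft.mul hright).congr_deriv ?_
  simp only [Function.comp_apply]
  rw [Real.rpow_sub_one hs0, Real.rpow_sub_one hs1]
  field_simp
  ring

theorem continuous_rpow_mul_one_sub_rpow (hp : 0 ≤ p) (hq : 0 ≤ q) :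
    Continuous fun s : ℝ => s ^ p * (1 - s) ^ q :=
  (Real.continuous_rpow_const hp).mul ((Real.continuous_rpow_const hq).comp (by fun_prop))

theorem strictMonoOn_rpow_mul_one_sub_rpow (hp : 0 < p) (hq : 0 ≤ q) :
    StrictMonoOn (fun s : ℝ => s ^ p * (1 - s) ^ q) (Icc 0 (p / (p + q))) := by
  refine strictMonoOn_of_deriv_pos (convex_Icc _ _)
    (continuous_rpow_mul_one_sub_rpow hp.le hq).continuousOn fun s hs => ?_
  rw [interior_Icc] at hs
  have hpq : 0 < p + q := by linarith
  have hmode : (p + q) * s < p := by linarith [(lt_div_iff₀ hpq).1 hs.2]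
  have hs1 : s < 1 := hs.2.trans_le ((div_le_one hpq).2 (by linarith))
  rw [(hasDerivAt_rpow_mul_one_sub_rpow ⟨hs.1, hs1⟩ p q).deriv]
  exact mul_pos (mul_pos (Real.rpow_pos_of_pos hs.1 _) (Real.rpow_pos_of_pos (sub_pos.2 hs1) _))
    (by linarith)

theorem strictAntiOn_rpow_mul_one_sub_rpow (hp : 0 < p) (hq : 0 ≤ q) :
    StrictAntiOn (fun s : ℝ => s ^ p * (1 - s) ^ q) (Icc (p / (p + q)) 1) := by
  refine strictAntiOn_of_deriv_neg (convex_Icc _ _)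
    (continuous_rpow_mul_one_sub_rpow hp.le hq).continuousOn fun s hs => ?_
  rw [interior_Icc] at hs
  have hpq : 0 < p + q := by linarith
  have hmode : p < (p + q) * s := by linarith [(div_lt_iff₀ hpq).1 hs.1]
  have hs0 : 0 < s := lt_trans (by positivity) hs.1
  rw [(hasDerivAt_rpow_mul_one_sub_rpow ⟨hs0, hs.2⟩ p q).deriv]
  exact mul_neg_of_pos_of_neg
    (mul_pos (Real.rpow_pos_of_pos hs0 _) (Real.rpow_pos_of_pos (sub_pos.2 hs.2) _)) (by linarith)

variable {m : ℕ}

theorem strictMonoOn_rpow_mul_one_sub_rpow_comp_root (hm : m ≠ 0) (hp : 0 < p) (hq : 0 ≤ q) :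
    StrictMonoOn (fun r : ℝ => (r ^ (m : ℝ)⁻¹) ^ p * (1 - r ^ (m : ℝ)⁻¹) ^ q)
      (Icc 0 ((p / (p + q)) ^ m)) := by
  have hroot : StrictMonoOn (fun r : ℝ => r ^ (m : ℝ)⁻¹) (Ici 0) :=
    Real.strictMonoOn_rpow_Ici_of_exponent_pos (by positivity)
  refine (strictMonoOn_rpow_mul_one_sub_rpow hp hq).comp (hroot.mono Icc_subset_Ici_self)
    fun r hr => ⟨Real.rpow_nonneg hr.1 _, ?_⟩
  calc r ^ (m : ℝ)⁻¹ ≤ ((p / (p + q)) ^ m) ^ (m : ℝ)⁻¹ :=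
        Real.rpow_le_rpow hr.1 hr.2 (by positivity)
    _ = p / (p + q) := Real.pow_rpow_inv_natCast (by positivity) hm

theorem strictAntiOn_rpow_mul_one_sub_rpow_comp_root (hm : m ≠ 0) (hp : 0 < p) (hq : 0 ≤ q) :
    StrictAntiOn (fun r : ℝ => (r ^ (m : ℝ)⁻¹) ^ p * (1 - r ^ (m : ℝ)⁻¹) ^ q)
      (Icc ((p / (p + q)) ^ m) 1) := by
  have hroot : StrictMonoOn (fun r : ℝ => r ^ (m : ℝ)⁻¹) (Ici 0) :=
    Real.strictMonoOn_rpow_Ici_of_exponent_pos (by positivity)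
  have hmode_nonneg : 0 ≤ (p / (p + q)) ^ m := by positivity
  refine (strictAntiOn_rpow_mul_one_sub_rpow hp hq).comp_strictMonoOn
    (hroot.mono fun r hr => hmode_nonneg.trans hr.1)
    fun r hr => ⟨?_, Real.rpow_le_one (hmode_nonneg.trans hr.1) hr.2 (by positivity)⟩
  calc p / (p + q) = ((p / (p + q)) ^ m) ^ (m : ℝ)⁻¹ :=
        (Real.pow_rpow_inv_natCast (by positivity) hm).symm
    _ ≤ r ^ (m : ℝ)⁻¹ := Real.rpow_le_rpow hmode_nonneg hr.1 (by positivity)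

end BetaKernel

theorem lt_of_strictMonoOn_Ioc_of_strictAntiOn_Ico {α β : Type*} [LinearOrder α] [Preorder β]
    {f : α → β} {a b c x : α} (hmono : StrictMonoOn f (Ioc a c))
    (hanti : StrictAntiOn f (Ico c b)) (hc : c ∈ Ioo a b) (hx : x ∈ Ioo a b) (hxc : x ≠ c) :
    f x < f c := by
  rcases hxc.lt_or_gt with hlt | hgt
  · exact hmono ⟨hx.1, hlt.le⟩ ⟨hc.1, le_rfl⟩ hlt
  · exact hanti ⟨le_rfl, hc.2⟩ ⟨hgt.le, hx.2⟩ hgt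

theorem rpow_two_sub_one_div_eq_rpow_inv_rpow {m : ℕ} (hm : m ≠ 0) {r : ℝ} (hr : 0 ≤ r) :
    r ^ (2 - 1 / (m : ℝ)) = (r ^ (m : ℝ)⁻¹) ^ (2 * (m : ℝ) - 1) := by
  rw [← Real.rpow_mul hr]
  congr 1
  field_simp

/-- For `m, n ≥ 2`, the function
`β(r) = m·n·r^{2 - 1/m}·(1 - r^{1/m})^{1 - 1/n}` on `(0,1)` is positive and attains a
unique maximum at `r̂ = ((2m - 1)·n / (2·m·n - 1))^m`: it is strictly increasing on
`(0, r̂]` and strictly decreasing on `[r̂, 1)`. -/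
theorem stmt11 (m n : ℕ) (hm : 2 ≤ m) (hn : 2 ≤ n)
    (β : ℝ → ℝ)
    (hβ : ∀ r : ℝ, β r = (m : ℝ) * n * r ^ ((2:ℝ) - 1 / (m:ℝ)) *
      (1 - r ^ ((1:ℝ) / (m:ℝ))) ^ ((1:ℝ) - 1 / (n:ℝ)))
    (rhat : ℝ)
    (hrhat : rhat = (((2 * (m:ℝ) - 1) * n) / (2 * (m:ℝ) * n - 1)) ^ m) :
    (∀ r ∈ Set.Ioo (0:ℝ) 1, 0 < β r) ∧
    StrictMonoOn β (Set.Ioc (0:ℝ) rhat) ∧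
    StrictAntiOn β (Set.Ico rhat (1:ℝ)) ∧
    (∀ r ∈ Set.Ioo (0:ℝ) 1, r ≠ rhat → β r < β rhat) := by
  have hm0 : m ≠ 0 := by omega
  have hmR : (2 : ℝ) ≤ m := by exact_mod_cast hm
  have hnR : (2 : ℝ) ≤ n := by exact_mod_cast hn
  have hmn : (0 : ℝ) < m * n := by positivity
  set p : ℝ := 2 * m - 1 with hp_def
  set q : ℝ := 1 - 1 / n with hq_def
  have hp : 0 < p := by linarith
  have hq : 0 < q := by rw [hq_def, sub_pos, div_lt_one (by linarith)]; linarith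
  replace hrhat : rhat = (p / (p + q)) ^ m := by
    rw [hrhat, hp_def, hq_def]
    field_simp
    ring_nf
  have hrhat_mem : rhat ∈ Ioo 0 1 := by
    rw [hrhat]
    have hmode_lt_one : p / (p + q) < 1 := (div_lt_one (by linarith)).2 (by linarith)
    exact ⟨by positivity, pow_lt_one₀ (by positivity) hmode_lt_one hm0⟩
  have hβ_eq :
      EqOn (fun r => (m * n : ℝ) * ((r ^ (m : ℝ)⁻¹) ^ p * (1 - r ^ (m : ℝ)⁻¹) ^ q)) β (Ici 0) := by
    intro r hr
    rw [hβ, rpow_two_sub_one_div_eq_rpow_inv_rpow hm0 hr, one_div]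
    ring
  have hmono : StrictMonoOn β (Ioc 0 rhat) := by
    rw [hrhat]
    exact (((strictMono_mul_left_of_pos hmn).comp_strictMonoOn
      (strictMonoOn_rpow_mul_one_sub_rpow_comp_root hm0 hp hq.le)).congr
        (hβ_eq.mono Icc_subset_Ici_self)).mono Ioc_subset_Icc_self
  have hanti : StrictAntiOn β (Ico rhat 1) := by
    rw [hrhat]
    exact (((strictMono_mul_left_of_pos hmn).comp_strictAntiOn
      (strictAntiOn_rpow_mul_one_sub_rpow_comp_root hm0 hp hq.le)).congr
        (hβ_eq.mono fun r hr => le_trans (by positivity) hr.1)).mono Ico_subset_Icc_self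
  refine ⟨fun r hr => ?_, hmono, hanti, fun r hr hne =>
    lt_of_strictMonoOn_Ioc_of_strictAntiOn_Ico hmono hanti hrhat_mem hr hne⟩
  have hroot_lt_one := Real.rpow_lt_one hr.1.le hr.2 (by positivity : (0 : ℝ) < 1 / m)
  rw [hβ]
  exact mul_pos (mul_pos hmn (Real.rpow_pos_of_pos hr.1 _))
    (Real.rpow_pos_of_pos (sub_pos.2 hroot_lt_one) _)
end

section
/- Let I be a finite index set, and for each i ∈ I suppose the production of product i requires inputs from a set N_i ⊆ I with |N_i| = m_i ≥ 2, with n_{ij} ≥ 1 potential suppliers and link strengths x_{ij} ∈ [0,1] for each j ∈ N_i. Define the map R: [0,1]^I → [0,1]^I by R(r)_i = ∏_{j ∈ N_i} (1 - (1 - r_j·x_{ij})^{n_{ij}}). Then there exists ε > 0 such that R has no fixed point r with 0 < max_i r_i < ε; i.e., there are no nonzero fixed points in a punctured neighborhood of the origin. -/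
lemma aux_bern (t : ℝ) (n : ℕ) (ht : 0 ≤ t) (ht1 : t ≤ 1) : 1 - (1 - t) ^ n ≤ n * t := by
  have h : 1 + (n:ℝ) * (-t) ≤ (1 + -t) ^ n := one_add_mul_le_pow (by linarith) n
  have e : (1:ℝ) + -t = 1 - t := by ring
  rw [e] at h
  nlinarith

/-- Heterogeneous supply network. Each product `i` needs inputs
`N i` with `|N i| ≥ 2`, multisourcing `n i j ≥ 1` and link strengths `x i j ∈ [0,1]`.
The map `R(r)_i = ∏_{j ∈ N i} (1 - (1 - r_j·x_{ij})^{n_{ij}})` has no nonzero fixed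
point in a punctured neighborhood of the origin. -/
theorem stmt15 (I : Type*) [Fintype I]
    (N : I → Finset I) (hN : ∀ i, 2 ≤ (N i).card)
    (n : I → I → ℕ) (hn : ∀ i, ∀ j ∈ N i, 1 ≤ n i j)
    (x : I → I → ℝ) (hx : ∀ i j, x i j ∈ Set.Icc (0:ℝ) 1) :
    ∃ ε > (0:ℝ), ∀ r : I → ℝ, (∀ i, r i ∈ Set.Icc (0:ℝ) 1) →
      (∀ i, (∏ j ∈ N i, (1 - (1 - r j * x i j) ^ (n i j))) = r i) →
      (∀ i, r i < ε) → ∀ i, r i = 0 := by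
  classical
  set C : ℕ := (∑ i, ∑ j ∈ N i, n i j) + 1 with hCdef
  have hCpos : (0:ℝ) < C := by positivity
  have hnC : ∀ i, ∀ j ∈ N i, n i j ≤ C := by
    intro i j hj
    calc n i j ≤ ∑ j ∈ N i, n i j :=
          Finset.single_le_sum (fun _ _ => Nat.zero_le _) hj
      _ ≤ ∑ i, ∑ j ∈ N i, n i j :=
          Finset.single_le_sum (f := fun i => ∑ j ∈ N i, n i j)
            (fun _ _ => Nat.zero_le _) (Finset.mem_univ i)
      _ ≤ C := Nat.le_succ _
  refine ⟨1/(C:ℝ)^2, by positivity, ?_⟩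
  intro r hr hfix hlt i
  obtain ⟨i0, -, hmax⟩ := Finset.exists_max_image Finset.univ r ⟨i, Finset.mem_univ i⟩
  have hmax' : ∀ j, r j ≤ r i0 := fun j => hmax j (Finset.mem_univ j)
  set M := r i0 with hMdef
  have hM0 : 0 ≤ M := (hr i0).1
  -- bounds on factors
  have hf01 : ∀ j ∈ N i0, 0 ≤ 1 - (1 - r j * x i0 j) ^ (n i0 j) ∧
      1 - (1 - r j * x i0 j) ^ (n i0 j) ≤ 1 := by
    intro j hj
    have ht0 : 0 ≤ r j * x i0 j := mul_nonneg (hr j).1 (hx i0 j).1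
    have ht1 : r j * x i0 j ≤ 1 := mul_le_one₀ (hr j).2 (hx i0 j).1 (hx i0 j).2
    have h1 : (1 - r j * x i0 j) ^ (n i0 j) ≤ 1 :=
      pow_le_one₀ (by linarith) (by linarith)
    have h2 : (0:ℝ) ≤ (1 - r j * x i0 j) ^ (n i0 j) := pow_nonneg (by linarith) _
    constructor <;> linarith
  have hfCM : ∀ j ∈ N i0, 1 - (1 - r j * x i0 j) ^ (n i0 j) ≤ C * M := by
    intro j hj
    have ht0 : 0 ≤ r j * x i0 j := mul_nonneg (hr j).1 (hx i0 j).1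
    have htM : r j * x i0 j ≤ M := by
      calc r j * x i0 j ≤ r j * 1 := by
            exact mul_le_mul_of_nonneg_left (hx i0 j).2 (hr j).1
        _ = r j := mul_one _
        _ ≤ M := hmax' j
    have ht1 : r j * x i0 j ≤ 1 := mul_le_one₀ (hr j).2 (hx i0 j).1 (hx i0 j).2
    have hb := aux_bern (r j * x i0 j) (n i0 j) ht0 ht1
    have hnc : (n i0 j : ℝ) ≤ C := by exact_mod_cast hnC i0 j hj
    calc 1 - (1 - r j * x i0 j) ^ (n i0 j) ≤ (n i0 j : ℝ) * (r j * x i0 j) := hb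
      _ ≤ C * M := by
          apply mul_le_mul hnc htM ht0 (le_of_lt hCpos)
  -- pick two distinct elements of N i0
  obtain ⟨j1, hj1, j2, hj2, hne⟩ :=
    Finset.one_lt_card.mp (lt_of_lt_of_le one_lt_two (hN i0))
  have hj2' : j2 ∈ (N i0).erase j1 := Finset.mem_erase.mpr ⟨Ne.symm hne, hj2⟩
  have hprod : M ≤ (C:ℝ) * M * ((C:ℝ) * M) := by
    have key : (∏ j ∈ N i0, (1 - (1 - r j * x i0 j) ^ (n i0 j)))
        = (1 - (1 - r j1 * x i0 j1) ^ (n i0 j1)) *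
          ((1 - (1 - r j2 * x i0 j2) ^ (n i0 j2)) *
            ∏ j ∈ ((N i0).erase j1).erase j2, (1 - (1 - r j * x i0 j) ^ (n i0 j))) := by
      rw [← Finset.mul_prod_erase _ _ hj1, ← Finset.mul_prod_erase _ _ hj2']
    have hrest : (∏ j ∈ ((N i0).erase j1).erase j2,
        (1 - (1 - r j * x i0 j) ^ (n i0 j))) ≤ 1 := by
      apply Finset.prod_le_one
      · intro j hj
        exact (hf01 j (Finset.mem_of_mem_erase (Finset.mem_of_mem_erase hj))).1
      · intro j hj
        exact (hf01 j (Finset.mem_of_mem_erase (Finset.mem_of_mem_erase hj))).2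
    have hrest0 : (0:ℝ) ≤ ∏ j ∈ ((N i0).erase j1).erase j2,
        (1 - (1 - r j * x i0 j) ^ (n i0 j)) := by
      apply Finset.prod_nonneg
      intro j hj
      exact (hf01 j (Finset.mem_of_mem_erase (Finset.mem_of_mem_erase hj))).1
    have h1 := hf01 j1 hj1
    have h2 := hf01 j2 hj2
    have hc1 := hfCM j1 hj1
    have hc2 := hfCM j2 hj2
    have hfix0 := hfix i0
    rw [key] at hfix0
    calc M = (1 - (1 - r j1 * x i0 j1) ^ (n i0 j1)) *
          ((1 - (1 - r j2 * x i0 j2) ^ (n i0 j2)) *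
            ∏ j ∈ ((N i0).erase j1).erase j2, (1 - (1 - r j * x i0 j) ^ (n i0 j))) :=
          hfix0.symm
      _ ≤ (C:ℝ) * M * ((C:ℝ) * M) :=
          mul_le_mul hc1
            (le_trans (mul_le_of_le_one_right h2.1 hrest) hc2)
            (mul_nonneg h2.1 hrest0) (mul_nonneg hCpos.le hM0)
  have hMlt : M < 1/(C:ℝ)^2 := hlt i0
  have hC2 : M * (C:ℝ)^2 < 1 := (lt_div_iff₀ (by positivity)).mp hMlt
  have hMle : M ≤ 0 := by nlinarith [hprod, hC2, hM0]
  have hMzero : M = 0 := le_antisymm hMle hM0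
  have : r i ≤ 0 := by rw [← hMzero]; exact hmax' i
  linarith [(hr i).1]
end

section
/- Let m ≥ 3 and n ≥ 2 and define χ(r) = (1 - (1 - r^{1/m})^{1/n}) / r on (0,1). Then χ is strictly decreasing at r̂ = ((2m - 1)·n / (2·m·n - 1))^m; that is, χ'(r̂) < 0. Consequently, r̂ is strictly smaller than any minimizer r_crit of χ on (0,1]. -/
/-!
Put `v = 1 - r^(1/m)` and `c = 1/(mn)`. The numerator of `χ'(r)` is
`v^(1/n - 1) * (c + (1 - c) v - v^(1 - 1/n))`, so `χ'(r) < 0` exactly when the affine function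
`c + (1 - c) v` lies strictly below the concave function `v^(1 - 1/n)`. The two agree at `v = 1`,
so by concavity it suffices to check the inequality at `v̂ = 1 - r̂^(1/m) = (n-1)/(2mn-1)`. There
it is equivalent to `(1 + t)^n < m (2 + t)` with `t = (2m-1)/(m(n-1))`, which follows from
`(1 + t)^(n-1) ≤ exp ((n-1) t) = exp (2 - 1/m)` except for a few small `(m, n)`, checked directly.
Hence `χ' < 0` on `(0, r̂]`, and a minimizer of `χ` on `(0, 1]` cannot lie there: it would be an
interior local minimum.
-/

open Real Set Topology

lemma ConcaveOn.pos_of_mem_Ico {f : ℝ → ℝ} {s : Set ℝ} {a b x : ℝ} (hf : ConcaveOn ℝ s f)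
    (ha : a ∈ s) (hb : b ∈ s) (hfa : 0 < f a) (hfb : 0 ≤ f b) (hx : x ∈ Ico a b) : 0 < f x := by
  rcases hx.1.eq_or_lt with rfl | hax
  · exact hfa
  obtain ⟨θ, μ, hθ, hμ, hθμ, rfl⟩ : x ∈ openSegment ℝ a b := by
    rw [openSegment_eq_Ioo (hax.trans hx.2)]; exact ⟨hax, hx.2⟩
  calc 0 < θ • f a + μ • f b := by simp only [smul_eq_mul]; positivity
    _ ≤ f (θ • a + μ • b) := hf.2 ha hb hθ.le hμ.le hθμ

lemma affine_lt_rpow_of_le {c p w v : ℝ} (hp₀ : 0 ≤ p) (hp₁ : p ≤ 1) (hw : 0 ≤ w)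
    (hwv : w ≤ v) (hv : v < 1) (h : c + (1 - c) * w < w ^ p) : c + (1 - c) * v < v ^ p := by
  have hconc : ConcaveOn ℝ (Ici 0) fun x : ℝ => x ^ p - (c + (1 - c) * x) :=
    ((concaveOn_rpow hp₀ hp₁).sub
      (((LinearMap.mul ℝ ℝ (1 - c)).convexOn (convex_Ici 0)).add_const c)).congr
      fun x _ => by simp only [Pi.sub_apply, Pi.add_apply, LinearMap.mul_apply']; ring
  have hpos := hconc.pos_of_mem_Ico hw (mem_Ici.2 zero_le_one) (by linarith) (by simp) ⟨hwv, hv⟩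
  linarith

lemma div_lt_one_div_rpow_one_sub_inv {A B : ℝ} {n : ℕ} (hn : n ≠ 0) (hA : 0 ≤ A) (hB : 0 < B)
    (h : A ^ n < B) : A / B < (1 / B) ^ (1 - 1 / (n : ℝ)) := by
  have hn' : (0 : ℝ) < n := by positivity
  have hroot : A < B ^ (n : ℝ)⁻¹ :=
    (lt_rpow_inv_iff_of_pos hA hB.le hn').2 (by rwa [rpow_natCast])
  rw [one_div, inv_rpow hB.le, ← rpow_neg hB.le, neg_sub, rpow_sub hB, rpow_one, one_div]
  gcongr

lemma hasDerivAt_one_sub_one_sub_rpow_rpow_div {a b r : ℝ} (hr : 0 < r) (hu : r ^ a < 1) :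
    HasDerivAt (fun x => (1 - (1 - x ^ a) ^ b) / x)
      ((1 - r ^ a) ^ (b - 1) * (a * b + (1 - a * b) * (1 - r ^ a) - (1 - r ^ a) ^ (1 - b))
        / r ^ 2) r := by
  have hv : 0 < 1 - r ^ a := sub_pos.2 hu
  refine (((((hasDerivAt_rpow_const (Or.inl hr.ne')).const_sub 1).rpow_const
    (Or.inl hv.ne')).const_sub 1).div (hasDerivAt_id' r) hr.ne').congr_deriv ?_
  have h1 : r ^ (a - 1) = r ^ a / r := rpow_sub_one hr.ne' a
  have h2 : (1 - r ^ a) ^ b = (1 - r ^ a) ^ (b - 1) * (1 - r ^ a) := by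
    rw [← rpow_add_one hv.ne', sub_add_cancel]
  have h3 : (1 - r ^ a) ^ (b - 1) * (1 - r ^ a) ^ (1 - b) = 1 := by
    rw [← rpow_add hv, sub_add_sub_cancel', sub_self, rpow_zero]
  rw [h1, h2]
  field_simp
  linear_combination h3

lemma exp_two_lt_d4 : exp 2 < 7.3891 := by
  rw [show (2 : ℝ) = 1 + 1 by norm_num, exp_add]
  nlinarith [exp_pos 1, exp_one_lt_d9]

lemma one_add_pow_le_exp_mul {t : ℝ} (ht : 0 ≤ 1 + t) {n : ℕ} (hn : 1 ≤ n) :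
    (1 + t) ^ n ≤ exp ((n - 1) * t) * (1 + t) := by
  obtain ⟨k, rfl⟩ := Nat.exists_eq_add_of_le' hn
  rw [pow_succ, Nat.cast_add_one, add_sub_cancel_right, exp_nat_mul]
  gcongr
  linarith [add_one_le_exp t]

lemma one_add_pow_lt_of_exp_bound {M t : ℝ} {n : ℕ} (hM : 0 < M) (hn : 1 ≤ n) (ht : 0 ≤ t)
    (htn : (n - 1) * t = 2 - 1 / M)
    -- what is left after bounding `exp (2 - 1/M)` by `e² / (1 + 1/M + 1/(2M²))`
    (hlin : 7.3891 * (1 + t) ≤ (M + 1 + 1 / (2 * M)) * (2 + t)) :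
    (1 + t) ^ n < M * (2 + t) := by
  set Q := 1 + 1 / M + (1 / M) ^ 2 / 2
  have hQ : 0 < Q := by positivity
  have hE : exp (2 - 1 / M) * Q < 7.3891 :=
    calc exp (2 - 1 / M) * Q ≤ exp (2 - 1 / M) * exp (1 / M) := by
          gcongr; exact quadratic_le_exp_of_nonneg (by positivity)
      _ = exp 2 := by rw [← exp_add, sub_add_cancel]
      _ < 7.3891 := exp_two_lt_d4
  have hMQ : M * Q = M + 1 + 1 / (2 * M) := by simp only [Q]; field_simp
  calc (1 + t) ^ n ≤ exp (2 - 1 / M) * (1 + t) := htn ▸ one_add_pow_le_exp_mul (by linarith) hn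
    _ < M * (2 + t) := by
      refine lt_of_mul_lt_mul_right ?_ hQ.le
      calc exp (2 - 1 / M) * (1 + t) * Q = exp (2 - 1 / M) * Q * (1 + t) := by ring
        _ < 7.3891 * (1 + t) := by gcongr
        _ ≤ (M + 1 + 1 / (2 * M)) * (2 + t) := hlin
        _ = M * (2 + t) * Q := by rw [← hMQ]; ring

lemma one_add_pow_lt_mul_two_add {m n : ℕ} (hm : 3 ≤ m) (hn : 2 ≤ n) {t : ℝ}
    (ht : t * (m * (n - 1)) = 2 * m - 1) : (1 + t) ^ n < m * (2 + t) := by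
  have hM : (3 : ℝ) ≤ m := by exact_mod_cast hm
  have hN : (2 : ℝ) ≤ n := by exact_mod_cast hn
  have hmn : (0 : ℝ) < m * (n - 1) := by nlinarith
  have htdef : t = (2 * m - 1) / (m * (n - 1)) := eq_div_of_mul_eq hmn.ne' ht
  have ht0 : 0 ≤ t := htdef ▸ div_nonneg (by linarith) hmn.le
  have htn : (n - 1) * t = 2 - 1 / m := by field_simp; linear_combination ht
  obtain ⟨rfl, hn6⟩ | ⟨rfl, rfl⟩ | ⟨rfl, hn7⟩ | ⟨rfl, hn3⟩ | hm5 :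
      (m = 3 ∧ n ≤ 6) ∨ (m = 4 ∧ n = 2) ∨ (m = 3 ∧ 7 ≤ n) ∨ (m = 4 ∧ 3 ≤ n) ∨ 5 ≤ m := by omega
  -- the exponential bound is too weak in these cases, which are checked numerically
  · rw [htdef]
    interval_cases n <;> norm_num
  · rw [htdef]
    norm_num
  · refine one_add_pow_lt_of_exp_bound (by positivity) (by omega) ht0 htn ?_
    have hN7 : (7 : ℝ) ≤ n := by exact_mod_cast hn7
    have : t ≤ 5 / 18 := by push_cast at ht; nlinarith
    norm_num; linarith
  · refine one_add_pow_lt_of_exp_bound (by positivity) (by omega) ht0 htn ?_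
    have hN3 : (3 : ℝ) ≤ n := by exact_mod_cast hn3
    have : t ≤ 7 / 8 := by push_cast at ht; nlinarith
    norm_num; linarith
  · refine one_add_pow_lt_of_exp_bound (by positivity) (by omega) ht0 htn ?_
    have hM5 : (5 : ℝ) ≤ m := by exact_mod_cast hm5
    have : t < 2 := by
      nlinarith [mul_nonneg (mul_nonneg ht0 (by linarith : (0 : ℝ) ≤ m))
        (by linarith : (0 : ℝ) ≤ n - 2)]
    have : 0 < 1 / (2 * (m : ℝ)) := by positivity
    nlinarith

lemma affine_lt_rpow_at_rhat {m n : ℕ} (hm : 3 ≤ m) (hn : 2 ≤ n) :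
    1 / (m * n : ℝ) + (1 - 1 / (m * n : ℝ)) * ((n - 1) / (2 * m * n - 1))
      < ((n - 1 : ℝ) / (2 * m * n - 1)) ^ (1 - 1 / (n : ℝ)) := by
  have hM : (3 : ℝ) ≤ m := by exact_mod_cast hm
  have hN : (2 : ℝ) ≤ n := by exact_mod_cast hn
  have hn1 : (0 : ℝ) < n - 1 := by linarith
  set t : ℝ := (2 * m - 1) / (m * (n - 1))
  have ht0 : 0 < t := div_pos (by linarith) (by positivity)
  have ht : t * (m * (n - 1)) = 2 * m - 1 := div_mul_cancel₀ _ (by positivity)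
  have hmt : m * (2 + t) = (2 * m * n - 1) / (n - 1) := by
    simp only [t]; field_simp; ring
  have h1t : 1 + t = (m * n + m - 1) / (m * (n - 1)) := by
    simp only [t]; field_simp; ring
  have hA : 1 / (m * n : ℝ) + (1 - 1 / (m * n : ℝ)) * ((n - 1) / (2 * m * n - 1))
      = (1 + t) / (m * (2 + t)) := by
    have hD : (m * n * 2 - 1 : ℝ) ≠ 0 := by nlinarith
    rw [hmt, h1t]; field_simp; ring
  have hB : (n - 1 : ℝ) / (2 * m * n - 1) = 1 / (m * (2 + t)) := by
    rw [hmt, one_div_div]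
  rw [hA, hB]
  exact div_lt_one_div_rpow_one_sub_inv (by omega) (by positivity) (by positivity)
    (one_add_pow_lt_mul_two_add hm hn ht)

lemma two_mul_sub_one_mul_div_mem_Ioo {m n : ℕ} (hm : 1 ≤ m) (hn : 2 ≤ n) :
    (2 * m - 1) * n / (2 * m * n - 1 : ℝ) ∈ Ioo 0 1 := by
  have hM : (1 : ℝ) ≤ m := by exact_mod_cast hm
  have hN : (2 : ℝ) ≤ n := by exact_mod_cast hn
  have hD : (0 : ℝ) < 2 * m * n - 1 := by nlinarith
  exact ⟨div_pos (by nlinarith) hD, (div_lt_one hD).2 (by nlinarith)⟩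

lemma deriv_neg_of_le_rhat {m n : ℕ} (hm : 3 ≤ m) (hn : 2 ≤ n) {χ : ℝ → ℝ}
    (hχ : ∀ r ∈ Ioo (0 : ℝ) 1, χ r = (1 - (1 - r ^ (1 / (m : ℝ))) ^ (1 / (n : ℝ))) / r)
    {r : ℝ} (hr0 : 0 < r) (hr : r ≤ ((2 * m - 1) * n / (2 * m * n - 1) : ℝ) ^ m) :
    deriv χ r < 0 := by
  have hM : (3 : ℝ) ≤ m := by exact_mod_cast hm
  have hN : (2 : ℝ) ≤ n := by exact_mod_cast hn
  have hD : (0 : ℝ) < 2 * m * n - 1 := by nlinarith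
  obtain ⟨hq0, hq1⟩ := two_mul_sub_one_mul_div_mem_Ioo (show 1 ≤ m by omega) hn
  have hr1 : r < 1 := hr.trans_lt (pow_lt_one₀ hq0.le hq1 (show m ≠ 0 by omega))
  have hu0 : 0 < r ^ (1 / (m : ℝ)) := rpow_pos_of_pos hr0 _
  have hu1 : r ^ (1 / (m : ℝ)) < 1 := rpow_lt_one hr0.le hr1 (by positivity)
  have hvhat : (n - 1) / (2 * m * n - 1 : ℝ) ≤ 1 - r ^ (1 / (m : ℝ)) := by
    have hroot : r ^ (1 / (m : ℝ)) ≤ (2 * m - 1) * n / (2 * m * n - 1) := by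
      rw [← pow_rpow_inv_natCast hq0.le (by omega : m ≠ 0), ← one_div]
      gcongr
    rw [div_le_iff₀ hD]
    rw [le_div_iff₀ hD] at hroot
    linarith
  have hn' : 1 / (n : ℝ) ≤ 1 := (div_le_one (by positivity)).2 (by linarith)
  have hgap : 1 / m * (1 / n) + (1 - 1 / m * (1 / n)) * (1 - r ^ (1 / (m : ℝ)))
      < (1 - r ^ (1 / (m : ℝ))) ^ (1 - 1 / (n : ℝ)) := by
    rw [one_div_mul_one_div]
    exact affine_lt_rpow_of_le (sub_nonneg.2 hn') (sub_le_self _ (by positivity))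
      (div_nonneg (by linarith) hD.le) hvhat (by linarith) (affine_lt_rpow_at_rhat hm hn)
  have hχ' : χ =ᶠ[𝓝 r] fun x => (1 - (1 - x ^ (1 / (m : ℝ))) ^ (1 / (n : ℝ))) / x :=
    Filter.eventually_of_mem (Ioo_mem_nhds hr0 hr1) hχ
  rw [((hasDerivAt_one_sub_one_sub_rpow_rpow_div hr0 hu1).congr_of_eventuallyEq hχ').deriv]
  exact div_neg_of_neg_of_pos (mul_neg_of_pos_of_neg (rpow_pos_of_pos (by linarith) _)
    (by linarith)) (by positivity)

/-- For `m ≥ 3`, `n ≥ 2`, `χ(r) = (1 - (1 - r^{1/m})^{1/n}) / r` has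
negative derivative at `r̂ = ((2m-1)n/(2mn-1))^m`; consequently `r̂` is strictly
smaller than any minimizer of `χ` on `(0,1]`. -/
theorem stmt16 (m n : ℕ) (hm : 3 ≤ m) (hn : 2 ≤ n)
    (χ : ℝ → ℝ)
    (hχ : ∀ r ∈ Set.Ioo (0:ℝ) 1,
      χ r = (1 - (1 - r ^ ((1:ℝ) / (m:ℝ))) ^ ((1:ℝ) / (n:ℝ))) / r)
    (rhat : ℝ)
    (hrhat : rhat = (((2 * (m:ℝ) - 1) * n) / (2 * (m:ℝ) * n - 1)) ^ m) :
    deriv χ rhat < 0 ∧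
    ∀ rcrit ∈ Set.Ioc (0:ℝ) 1, (∀ r ∈ Set.Ioc (0:ℝ) 1, χ rcrit ≤ χ r) →
      rhat < rcrit := by
  obtain ⟨hq0, hq1⟩ := two_mul_sub_one_mul_div_mem_Ioo (show 1 ≤ m by omega) hn
  have hrhat0 : 0 < rhat := hrhat ▸ pow_pos hq0 m
  have hrhat1 : rhat < 1 := hrhat ▸ pow_lt_one₀ hq0.le hq1 (show m ≠ 0 by omega)
  have hderiv : ∀ r ∈ Ioc 0 rhat, deriv χ r < 0 := fun r hr =>
    deriv_neg_of_le_rhat hm hn hχ hr.1 (hrhat ▸ hr.2)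
  refine ⟨hderiv rhat ⟨hrhat0, le_rfl⟩, fun rcrit hrcrit hmin => ?_⟩
  by_contra! hle
  have hloc : IsLocalMin χ rcrit := Filter.eventually_of_mem
    (Ioo_mem_nhds hrcrit.1 (hle.trans_lt hrhat1)) fun x hx => hmin x ⟨hx.1, hx.2.le⟩
  exact (hderiv rcrit ⟨hrcrit.1, hle⟩).ne hloc.deriv_eq_zero
end

section
/- Let n ≥ 2 and m ≥ 2, let g: [0,1] → ℝ be positive and strictly decreasing, let κ > 0 and f̄ ∈ (0,1], and let r_crit be the minimizer of χ(r) = (1 - (1 - r^{1/m})^{1/n})/r on (0,1], assumed to lie in (0,1). If additionally m ≥ 3, then the function M(r) = κ·g(r·f̄)·m·n·r^{2 - 1/m}·(1 - r^{1/m})^{1 - 1/n} is strictly decreasing on [r_crit, 1). -/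
/-!
Substituting `r = (1 - y ^ n) ^ m` with `y ∈ (0, 1)` turns `χ` into `(1 - y) / (1 - y ^ n) ^ m` and
`r ^ (2 - 1/m) * (1 - r ^ (1/m)) ^ (1 - 1/n)` into the polynomial `(1 - y ^ n) ^ (2m - 1) * y ^ (n - 1)`,
which increases in `y` as long as `y ^ n ≤ (n - 1) / (2mn - 1)`; the point `b` where equality
holds gives the peak `r̂ = (1 - b ^ n) ^ m`. Since `1 - y ^ n = (1 - y) ∑_{i<n} y ^ i`, the function `χ` increases in `y` wherever
`∑_{i<n} y ^ i < mn y ^ (n - 1)`, and on `[b, 1)` this follows from its value at `b`, which is the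
numerical inequality `(n - 1) (1 + (2m - 1) / (m (n - 1))) ^ n < 2mn - 1`. For large `n` that
inequality reads `exp (2 - 1/m) < 2m`, which is where `m ≥ 3` enters. So the minimiser `r_crit`
of `χ` satisfies `r̂ ≤ r_crit`, and on `[r_crit, 1)` the map `M` is a product of two positive
decreasing factors.
-/

open Real Set Finset

lemma mul_one_add_div_pow_succ_le (K : ℕ) (hK : 0 < K) {c : ℝ} (hc : 0 ≤ c) :
    (K : ℝ) * (1 + c / K) ^ (K + 1) ≤ exp c * (K + c) := by
  have hK' : (0 : ℝ) < K := by exact_mod_cast hK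
  have hpow : (1 + c / K) ^ K ≤ exp c := by
    calc (1 + c / K) ^ K ≤ exp (c / K) ^ K := by
          gcongr
          linarith [add_one_le_exp (c / K)]
      _ = exp c := by rw [← exp_nat_mul, mul_div_cancel₀ _ hK'.ne']
  calc (K : ℝ) * (1 + c / K) ^ (K + 1) = (1 + c / K) ^ K * (K + c) := by
        rw [pow_succ]; field_simp
    _ ≤ exp c * (K + c) := by gcongr

lemma exp_two_lt : exp 2 < 7.39 := by
  have h : exp 2 = exp 1 ^ 2 := by rw [← exp_nat_mul]; norm_num
  rw [h]
  calc exp 1 ^ 2 < 2.7182818286 ^ 2 := by gcongr; exact exp_one_lt_d9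
    _ < 7.39 := by norm_num

lemma exp_five_div_three_lt : exp (5 / 3) < 5.5 := by
  have h : exp (5 / 3) ^ 3 = exp 1 ^ 5 := by simp only [← exp_nat_mul]; norm_num
  refine lt_of_pow_lt_pow_left₀ 3 (by norm_num) ?_
  rw [h]
  calc exp 1 ^ 5 < 2.7182818286 ^ 5 := by gcongr; exact exp_one_lt_d9
    _ < 5.5 ^ 3 := by norm_num

lemma mul_one_add_five_div_pow_lt (K : ℕ) (hK : 0 < K) :
    (K : ℝ) * (1 + 5 / 3 / K) ^ (K + 1) < 6 * K + 5 := by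
  rcases le_or_gt K 8 with hK8 | hK8
  · interval_cases K <;> norm_num
  · have hK' : (9 : ℝ) ≤ K := by exact_mod_cast hK8
    have := mul_one_add_div_pow_succ_le K hK (c := 5 / 3) (by norm_num)
    nlinarith [exp_five_div_three_lt]

lemma mul_one_add_two_div_pow_lt (K : ℕ) (hK : 0 < K) :
    (K : ℝ) * (1 + 2 / K) ^ (K + 1) < 8 * K + 7 := by
  rcases le_or_gt K 12 with hK12 | hK12
  · interval_cases K <;> norm_num
  · have hK' : (13 : ℝ) ≤ K := by exact_mod_cast hK12
    have := mul_one_add_div_pow_succ_le K hK (c := 2) (by norm_num)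
    nlinarith [exp_two_lt]

lemma mul_one_add_div_pow_lt (m K : ℕ) (hm : 3 ≤ m) (hK : 0 < K) :
    (K : ℝ) * (1 + (2 * m - 1) / (m * K)) ^ (K + 1) < 2 * m * (K + 1) - 1 := by
  have hK' : (0 : ℝ) < K := by exact_mod_cast hK
  rcases hm.eq_or_lt with rfl | hm4
  · convert mul_one_add_five_div_pow_lt K hK using 3 <;> push_cast <;> ring
  · have hm4' : (4 : ℝ) ≤ m := by exact_mod_cast hm4
    have ht : (2 * m - 1) / (m * K) ≤ 2 / (K : ℝ) := by
      rw [div_le_div_iff₀ (by positivity) hK']; nlinarith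
    calc (K : ℝ) * (1 + (2 * m - 1) / (m * K)) ^ (K + 1)
        ≤ K * (1 + 2 / K) ^ (K + 1) := by
          gcongr
          have : (0 : ℝ) ≤ (2 * m - 1) / (m * K) := by
            apply div_nonneg <;> nlinarith
          linarith
      _ < 8 * K + 7 := mul_one_add_two_div_pow_lt K hK
      _ ≤ 2 * m * (K + 1) - 1 := by nlinarith

lemma mul_lt_of_pow_eq_peak {m n : ℕ} (hm : 3 ≤ m) (hn : 2 ≤ n) {b : ℝ}
    (hbn : b ^ n = (n - 1) / (2 * m * n - 1)) : b * (m * n + m - 1) < m * (n - 1) := by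
  obtain ⟨K, rfl⟩ : ∃ K, n = K + 1 := ⟨n - 1, by omega⟩
  have hK : 0 < K := by omega
  have hK' : (0 : ℝ) < K := by exact_mod_cast hK
  have hm' : (3 : ℝ) ≤ m := by exact_mod_cast hm
  push_cast [add_sub_cancel_right] at hbn ⊢
  have hq : (0 : ℝ) < m * K := by positivity
  have hP : (0 : ℝ) < m * K + 2 * m - 1 := by nlinarith
  have hD : (0 : ℝ) < 2 * m * (K + 1) - 1 := by nlinarith
  have hlt : b ^ (K + 1) < (m * K / (m * K + 2 * m - 1)) ^ (K + 1) := by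
    have hkey := mul_one_add_div_pow_lt m K hm hK
    have h1 : 1 + (2 * m - 1) / (m * K) = (m * K + 2 * m - 1) / (m * K : ℝ) := by
      field_simp; ring
    rw [h1, div_pow, mul_div_assoc', div_lt_iff₀ (by positivity)] at hkey
    rw [hbn, div_pow, div_lt_div_iff₀ hD (by positivity)]
    linarith
  have := lt_of_pow_lt_pow_left₀ _ (by positivity) hlt
  rw [lt_div_iff₀ hP] at this
  linarith

lemma geom_sum_lt_of_pow_eq_peak {m n : ℕ} (hm : 3 ≤ m) (hn : 2 ≤ n) {b : ℝ} (hb : 0 < b)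
    (hbn : b ^ n = (n - 1) / (2 * m * n - 1)) :
    ∑ i ∈ range n, b ^ i < m * n * b ^ (n - 1) := by
  have hm' : (3 : ℝ) ≤ m := by exact_mod_cast hm
  have hn' : (2 : ℝ) ≤ n := by exact_mod_cast hn
  have hpeak := mul_lt_of_pow_eq_peak hm hn hbn
  have hP : (0 : ℝ) < m * n + m - 1 := by nlinarith
  have hb1 : b < 1 := by
    by_contra! h
    nlinarith [le_mul_of_one_le_left hP.le h]
  have hgeom := geom_sum_mul_neg b n
  have hpow : b ^ (n - 1) * b = b ^ n := by rw [← pow_succ, Nat.sub_add_cancel (by omega)]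
  have hD : (0 : ℝ) < 2 * m * n - 1 := by nlinarith
  rw [eq_div_iff hD.ne'] at hbn
  refine lt_of_mul_lt_mul_right (a := b * (1 - b)) ?_ (by nlinarith)
  calc (∑ i ∈ range n, b ^ i) * (b * (1 - b)) = b * (1 - b ^ n) := by rw [← hgeom]; ring
    _ < m * n * b ^ (n - 1) * (b * (1 - b)) := by
      rw [← mul_assoc _ b, mul_assoc _ (b ^ (n - 1)), hpow]
      refine lt_of_mul_lt_mul_right (a := 2 * (m : ℝ) * n - 1) ?_ hD.le
      linear_combination (n : ℝ) * hpeak - (b + m * n * (1 - b)) * hbn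

section Substitution

variable {m n : ℕ} {y : ℝ}

lemma one_sub_pow_pow_rpow_inv (hm : m ≠ 0) (hy : y ∈ Icc (0 : ℝ) 1) :
    ((1 - y ^ n) ^ m) ^ ((1 : ℝ) / m) = 1 - y ^ n := by
  rw [one_div, pow_rpow_inv_natCast (sub_nonneg.2 (pow_le_one₀ hy.1 hy.2)) hm]

lemma exists_one_sub_pow_pow_eq (hm : m ≠ 0) (hn : n ≠ 0) {r : ℝ} (hr : r ∈ Ioo (0 : ℝ) 1) :
    ∃ y ∈ Ioo (0 : ℝ) 1, (1 - y ^ n) ^ m = r := by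
  set u := r ^ ((m : ℝ)⁻¹)
  have hu0 : 0 < u := rpow_pos_of_pos hr.1 _
  have hu1 : u < 1 := rpow_lt_one hr.1.le hr.2 (by positivity)
  refine ⟨(1 - u) ^ ((n : ℝ)⁻¹), ⟨rpow_pos_of_pos (by linarith) _,
    rpow_lt_one (by linarith) (by linarith) (by positivity)⟩, ?_⟩
  rw [rpow_inv_natCast_pow (by linarith) hn, sub_sub_cancel, rpow_inv_natCast_pow hr.1.le hm]

lemma strictAntiOn_one_sub_pow_pow (hm : m ≠ 0) (hn : n ≠ 0) :
    StrictAntiOn (fun y : ℝ => (1 - y ^ n) ^ m) (Icc 0 1) := by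
  intro x hx y hy hxy
  have hyn : y ^ n ≤ 1 := pow_le_one₀ hy.1 hy.2
  have : x ^ n < y ^ n := pow_lt_pow_left₀ hxy hx.1 hn
  dsimp only
  gcongr

lemma one_sub_rpow_one_sub_pow_pow (hm : m ≠ 0) (hn : n ≠ 0) (hy : y ∈ Icc (0 : ℝ) 1) :
    (1 - ((1 - y ^ n) ^ m) ^ ((1 : ℝ) / m)) ^ ((1 : ℝ) / n) = y := by
  rw [one_sub_pow_pow_rpow_inv hm hy, sub_sub_cancel, one_div, pow_rpow_inv_natCast hy.1 hn]

lemma rpow_mul_one_sub_rpow_one_sub_pow_pow (hm : m ≠ 0) (hn : n ≠ 0) (hy : y ∈ Ioo (0 : ℝ) 1) :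
    ((1 - y ^ n) ^ m) ^ ((2 : ℝ) - 1 / m) * (1 - ((1 - y ^ n) ^ m) ^ ((1 : ℝ) / m)) ^ ((1 : ℝ) - 1 / n)
      = (1 - y ^ n) ^ (2 * m - 1) * y ^ (n - 1) := by
  have hu : 0 < 1 - y ^ n := sub_pos.2 (pow_lt_one₀ hy.1.le hy.2 hn)
  rw [rpow_sub (pow_pos hu m), one_sub_pow_pow_rpow_inv hm ⟨hy.1.le, hy.2.le⟩, sub_sub_cancel,
    rpow_sub (pow_pos hy.1 n), rpow_one, one_div (n : ℝ), pow_rpow_inv_natCast hy.1.le hn, rpow_two,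
    ← pow_mul, pow_sub₀ _ hu.ne' (by omega), pow_sub₀ _ hy.1.ne' (by omega), mul_comm m 2]
  simp only [pow_one, div_eq_mul_inv]

end Substitution

lemma geom_sum_mul_pow_le {b y : ℝ} (hb : 0 ≤ b) (hby : b ≤ y) (n : ℕ) :
    (∑ i ∈ range n, y ^ i) * b ^ (n - 1) ≤ (∑ i ∈ range n, b ^ i) * y ^ (n - 1) := by
  rw [sum_mul, sum_mul]
  refine sum_le_sum fun i hi => ?_
  have hi : i ≤ n - 1 := by rw [Finset.mem_range] at hi; omega
  rw [← pow_mul_pow_sub b hi, ← pow_mul_pow_sub y hi]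
  calc y ^ i * (b ^ i * b ^ (n - 1 - i)) = b ^ i * (y ^ i * b ^ (n - 1 - i)) := by ring
    _ ≤ b ^ i * (y ^ i * y ^ (n - 1 - i)) := by gcongr; exact pow_nonneg (hb.trans hby) _

lemma strictMonoOn_one_sub_div_one_sub_pow_pow {m n : ℕ} {b : ℝ} (hb : 0 < b)
    (hbS : ∑ i ∈ range n, b ^ i < m * n * b ^ (n - 1)) :
    StrictMonoOn (fun y : ℝ => (1 - y) / (1 - y ^ n) ^ m) (Ico b 1) := by
  have hn : n ≠ 0 := by rintro rfl; simp at hbS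
  have hm : m ≠ 0 := by
    rintro rfl
    have := sum_nonneg fun i (_ : i ∈ range n) => (pow_pos hb i).le
    simp only [CharP.cast_eq_zero, zero_mul] at hbS
    linarith
  have hne : ∀ y ∈ Ico b 1, (1 - y ^ n) ^ m ≠ 0 := fun y hy =>
    pow_ne_zero _ (sub_pos.2 (pow_lt_one₀ (hb.le.trans hy.1) hy.2 hn)).ne'
  refine strictMonoOn_of_deriv_pos (convex_Ico b 1)
    (ContinuousOn.div (by fun_prop) (by fun_prop) hne) fun y hy => ?_
  rw [interior_Ico] at hy
  have hy0 : 0 < y := hb.trans hy.1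
  have hS : ∑ i ∈ range n, y ^ i < m * n * y ^ (n - 1) := by
    have hle := geom_sum_mul_pow_le hb.le hy.1.le n
    have hbpow : 0 < b ^ (n - 1) := pow_pos hb _
    refine lt_of_mul_lt_mul_right (a := b ^ (n - 1)) ?_ hbpow.le
    calc (∑ i ∈ range n, y ^ i) * b ^ (n - 1) ≤ (∑ i ∈ range n, b ^ i) * y ^ (n - 1) := hle
      _ < m * n * b ^ (n - 1) * y ^ (n - 1) := by gcongr
      _ = m * n * y ^ (n - 1) * b ^ (n - 1) := by ring
  have hu : 0 < 1 - y ^ n := sub_pos.2 (pow_lt_one₀ hy0.le hy.2 hn)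
  have hd := ((hasDerivAt_id' y).const_sub 1).fun_div
    (((hasDerivAt_pow n y).const_sub 1).fun_pow m) (hne y ⟨hy.1.le, hy.2⟩)
  rw [hd.deriv]
  refine div_pos ?_ (by positivity)
  have hpow : (1 - y ^ n) ^ m = (1 - y ^ n) ^ (m - 1) * ((∑ i ∈ range n, y ^ i) * (1 - y)) := by
    rw [geom_sum_mul_neg, ← pow_succ, Nat.sub_add_cancel (Nat.one_le_iff_ne_zero.2 hm)]
  have h1y : 0 < 1 - y := by linarith [hy.2]
  have hgap : 0 < (m : ℝ) * n * y ^ (n - 1) - ∑ i ∈ range n, y ^ i := by linarith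
  calc (0 : ℝ) < (1 - y ^ n) ^ (m - 1) * (1 - y) * (m * n * y ^ (n - 1) - ∑ i ∈ range n, y ^ i) := by
        positivity
    _ = _ := by rw [hpow]; ring

lemma strictMonoOn_one_sub_pow_pow_mul_pow {j k n : ℕ} (hj : j ≠ 0) (hk : k ≠ 0) (hn : n ≠ 0)
    {b : ℝ} (hb : (j + k * n) * b ^ n ≤ j) :
    StrictMonoOn (fun y : ℝ => (1 - y ^ n) ^ k * y ^ j) (Icc 0 b) := by
  refine strictMonoOn_of_deriv_pos (convex_Icc 0 b) (by fun_prop) fun y hy => ?_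
  rw [interior_Icc] at hy
  have hj' : (0 : ℝ) < j := by positivity
  have hkn : (0 : ℝ) < k * n := by positivity
  have hyn : y ^ n < b ^ n := pow_lt_pow_left₀ hy.2 hy.1.le hn
  have hgap : 0 < j * (1 - y ^ n) - k * n * y ^ n := by nlinarith
  have hu : 0 < 1 - y ^ n := by nlinarith [pow_pos hy.1 n]
  have hd := (((hasDerivAt_pow n y).const_sub 1).fun_pow k).fun_mul (hasDerivAt_pow j y)
  rw [hd.deriv]
  obtain ⟨j, rfl⟩ : ∃ i, j = i + 1 := ⟨j - 1, by omega⟩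
  obtain ⟨k, rfl⟩ : ∃ i, k = i + 1 := ⟨k - 1, by omega⟩
  obtain ⟨n, rfl⟩ : ∃ i, n = i + 1 := ⟨n - 1, by omega⟩
  have hy0 := hy.1
  simp only [Nat.add_sub_cancel]
  push_cast at hgap ⊢
  calc (0 : ℝ) < (1 - y ^ (n + 1)) ^ k * y ^ j * ((j + 1) * (1 - y ^ (n + 1)) - (k + 1) * (n + 1) * y ^ (n + 1)) := by
        positivity
    _ = _ := by ring

theorem stmt18_general (m n : ℕ) (hn : 2 ≤ n) (hm3 : 3 ≤ m)
    (g : ℝ → ℝ) (hgpos : ∀ y ∈ Set.Icc (0:ℝ) 1, 0 < g y)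
    (hganti : StrictAntiOn g (Set.Icc (0:ℝ) 1))
    (κ : ℝ) (hκ : 0 < κ) (f : ℝ) (hf : f ∈ Set.Ioc (0:ℝ) 1)
    (χ : ℝ → ℝ)
    (hχ : ∀ r ∈ Set.Ioc (0:ℝ) 1,
      χ r = (1 - (1 - r ^ ((1:ℝ) / (m:ℝ))) ^ ((1:ℝ) / (n:ℝ))) / r)
    (rcrit : ℝ) (hrc : rcrit ∈ Set.Ioo (0:ℝ) 1)
    (hmin : ∀ r ∈ Set.Ioc (0:ℝ) 1, χ rcrit ≤ χ r)
    (M : ℝ → ℝ)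
    (hM : ∀ r : ℝ, M r = κ * g (r * f) * m * n * r ^ ((2:ℝ) - 1 / (m:ℝ)) *
      (1 - r ^ ((1:ℝ) / (m:ℝ))) ^ ((1:ℝ) - 1 / (n:ℝ))) :
    StrictAntiOn M (Set.Ico rcrit (1:ℝ)) := by
  have hm0 : m ≠ 0 := by omega
  have hn0 : n ≠ 0 := by omega
  have hm' : (3 : ℝ) ≤ m := by exact_mod_cast hm3
  have hn' : (2 : ℝ) ≤ n := by exact_mod_cast hn
  have hR := strictAntiOn_one_sub_pow_pow (m := m) hm0 hn0
  have hR_mem : ∀ y ∈ Ioo (0 : ℝ) 1, (1 - y ^ n) ^ m ∈ Ioc (0 : ℝ) 1 := fun y hy =>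
    have hyn : y ^ n < 1 := pow_lt_one₀ hy.1.le hy.2 hn0
    ⟨pow_pos (by linarith) m, pow_le_one₀ (by linarith) (by linarith [pow_pos hy.1 n])⟩
  have hχ' : ∀ y ∈ Ioo (0 : ℝ) 1, χ ((1 - y ^ n) ^ m) = (1 - y) / (1 - y ^ n) ^ m := fun y hy => by
    rw [hχ _ (hR_mem y hy), one_sub_rpow_one_sub_pow_pow hm0 hn0 ⟨hy.1.le, hy.2.le⟩]
  have hM' : ∀ y ∈ Ioo (0 : ℝ) 1, M ((1 - y ^ n) ^ m)
      = κ * m * n * (g ((1 - y ^ n) ^ m * f) * ((1 - y ^ n) ^ (2 * m - 1) * y ^ (n - 1))) := by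
    intro y hy
    rw [hM, ← rpow_mul_one_sub_rpow_one_sub_pow_pow hm0 hn0 hy]
    ring
  obtain ⟨b, hb, hbn⟩ : ∃ b ∈ Ioo (0 : ℝ) 1, b ^ n = (n - 1) / (2 * m * n - 1) := by
    have ha0 : (0 : ℝ) < (n - 1) / (2 * m * n - 1) := div_pos (by linarith) (by nlinarith)
    have ha1 : (n - 1) / (2 * m * n - 1) < (1 : ℝ) := by
      rw [div_lt_one (by nlinarith)]; nlinarith
    exact ⟨_, ⟨rpow_pos_of_pos ha0 _, rpow_lt_one ha0.le ha1 (by positivity)⟩,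
      rpow_inv_natCast_pow ha0.le hn0⟩
  obtain ⟨yc, hyc, rfl⟩ := exists_one_sub_pow_pow_eq hm0 hn0 hrc
  have hycb : yc ≤ b := by
    -- otherwise `χ` would be smaller at `r̂ = (1 - b ^ n) ^ m` than at `r_crit`
    by_contra! h
    have hχ_lt := strictMonoOn_one_sub_div_one_sub_pow_pow (m := m) hb.1
      (geom_sum_lt_of_pow_eq_peak hm3 hn hb.1 hbn) ⟨le_rfl, hb.2⟩ ⟨h.le, hyc.2⟩ h
    have := hmin _ (hR_mem b hb)
    rw [hχ' yc hyc, hχ' b hb] at this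
    exact hχ_lt.not_ge this
  intro r1 hr1 r2 hr2 h12
  have hr1' : r1 ∈ Ioo (0 : ℝ) 1 := ⟨(hR_mem yc hyc).1.trans_le hr1.1, hr1.2⟩
  have hr2' : r2 ∈ Ioo (0 : ℝ) 1 := ⟨hr1'.1.trans h12, hr2.2⟩
  have hrf : ∀ r ∈ Ioo (0 : ℝ) 1, r * f ∈ Icc (0 : ℝ) 1 := fun r hr =>
    ⟨mul_nonneg hr.1.le hf.1.le, mul_le_one₀ hr.2.le hf.1.le hf.2⟩
  have hg : g (r2 * f) < g (r1 * f) :=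
    hganti (hrf r1 hr1') (hrf r2 hr2') (mul_lt_mul_of_pos_right h12 hf.1)
  have hg2 := hgpos _ (hrf r2 hr2')
  obtain ⟨y1, hy1, rfl⟩ := exists_one_sub_pow_pow_eq hm0 hn0 hr1'
  obtain ⟨y2, hy2, rfl⟩ := exists_one_sub_pow_pow_eq hm0 hn0 hr2'
  have hIcc : ∀ y ∈ Ioo (0 : ℝ) 1, y ∈ Icc (0 : ℝ) 1 := fun y hy => ⟨hy.1.le, hy.2.le⟩
  have hy21 : y2 < y1 := (hR.lt_iff_gt (hIcc y1 hy1) (hIcc y2 hy2)).1 h12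
  have hy1c : y1 ≤ yc := (hR.le_iff_ge (hIcc yc hyc) (hIcc y1 hy1)).1 hr1.1
  have hP := strictMonoOn_one_sub_pow_pow_mul_pow (j := n - 1) (k := 2 * m - 1)
    (by omega) (by omega) hn0 (b := b) (by
      rw [hbn]; push_cast [Nat.cast_sub (by omega : 1 ≤ n), Nat.cast_sub (by omega : 1 ≤ 2 * m)]
      rw [mul_div_assoc', div_le_iff₀ (by nlinarith)]; nlinarith)
    ⟨hy2.1.le, (hy21.trans_le hy1c).le.trans hycb⟩ ⟨hy1.1.le, hy1c.trans hycb⟩ hy21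
  have hP2 : 0 < (1 - y2 ^ n) ^ (2 * m - 1) * y2 ^ (n - 1) :=
    mul_pos (pow_pos (sub_pos.2 (pow_lt_one₀ hy2.1.le hy2.2 hn0)) _) (pow_pos hy2.1 _)
  rw [hM' y1 hy1, hM' y2 hy2]
  exact mul_lt_mul_of_pos_left (mul_lt_mul'' hg hP hg2.le hP2.le) (by positivity)

/-- Marginal benefit along the physical-consistency curve.
For `n ≥ 2`, `m ≥ 3` (in particular `m ≥ 2`), `g` positive and strictly decreasing on
`[0,1]`, `κ > 0`, `f̄ ∈ (0,1]`, and `r_crit ∈ (0,1)` a minimizer of `χ` on `(0,1]`,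
the map `M(r) = κ·g(r·f̄)·m·n·r^{2-1/m}·(1-r^{1/m})^{1-1/n}` is strictly decreasing
on `[r_crit, 1)`. -/
theorem stmt18 (m n : ℕ) (hn : 2 ≤ n) (hm : 2 ≤ m) (hm3 : 3 ≤ m)
    (g : ℝ → ℝ) (hgpos : ∀ y ∈ Set.Icc (0:ℝ) 1, 0 < g y)
    (hganti : StrictAntiOn g (Set.Icc (0:ℝ) 1))
    (κ : ℝ) (hκ : 0 < κ) (f : ℝ) (hf : f ∈ Set.Ioc (0:ℝ) 1)
    (χ : ℝ → ℝ)
    (hχ : ∀ r ∈ Set.Ioc (0:ℝ) 1,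
      χ r = (1 - (1 - r ^ ((1:ℝ) / (m:ℝ))) ^ ((1:ℝ) / (n:ℝ))) / r)
    (rcrit : ℝ) (hrc : rcrit ∈ Set.Ioo (0:ℝ) 1)
    (hmin : ∀ r ∈ Set.Ioc (0:ℝ) 1, χ rcrit ≤ χ r)
    (M : ℝ → ℝ)
    (hM : ∀ r : ℝ, M r = κ * g (r * f) * m * n * r ^ ((2:ℝ) - 1 / (m:ℝ)) *
      (1 - r ^ ((1:ℝ) / (m:ℝ))) ^ ((1:ℝ) - 1 / (n:ℝ))) :
    StrictAntiOn M (Set.Ico rcrit (1:ℝ)) :=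
  stmt18_general m n hn hm3 g hgpos hganti κ hκ f hf χ hχ rcrit hrc hmin M hM
end
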